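/- For all odd integers n ≥ 3, the polynomials AExc_n^+(t) = ∑_{π even in S_n} t^{exc(π)} and AExc_n^-(t) = ∑_{π odd in S_n} t^{exc(π)} are palindromic of degree n-1; that is, their coefficient of t^k equals the coefficient of t^{n-1-k} for all k. For even n ≥ 2 they are not palindromic. -/

import Mathlib

open Finset Polynomial

/-- Number of excedances of a permutation of `{0,…,n-1}`. -/
def excA {n : ℕ} (π : Equiv.Perm (Fin n)) : ℕ :=
  (Finset.univ.filter (fun i => i < π i)).card

/-- Number of inversions. -/
def invA {n : ℕ} (π : Equiv.Perm (Fin n)) : ℕ :=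
  (Finset.univ.filter (fun p : Fin n × Fin n => p.1 < p.2 ∧ π p.2 < π p.1)).card

/-- `AExc_n^+(t)`, the excedance polynomial over even permutations. -/
noncomputable def AexcPt (n : ℕ) : Polynomial ℚ :=
  ∑ π ∈ Finset.univ.filter (fun π : Equiv.Perm (Fin n) => Even (invA π)),
    (Polynomial.X : Polynomial ℚ) ^ excA π

/-- `AExc_n^-(t)`, the excedance polynomial over odd permutations. -/
noncomputable def AexcMt (n : ℕ) : Polynomial ℚ :=
  ∑ π ∈ Finset.univ.filter (fun π : Equiv.Perm (Fin n) => ¬ Even (invA π)),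
    (Polynomial.X : Polynomial ℚ) ^ excA π

/-- A polynomial with coefficients `a_0,…,a_{n-1}` is palindromic if
`a_k = a_{n-1-k}` for all `k ≤ n-1`. -/
def PalindromicDeg (f : Polynomial ℚ) (N : ℕ) : Prop :=
  ∀ k ≤ N, f.coeff k = f.coeff (N - k)

/-!
Let `c = finRotate (n + 1)` be the cycle `i ↦ i + 1`. Writing `j = π⁻¹ (i + 1)`, `i` is an
excedance of `π⁻¹ * c` exactly when `0 < π j ≤ j`, i.e. when `j` is neither an excedance of `π`
nor `π⁻¹ 0`; hence `exc π + exc (π⁻¹ * c) = n`. As `sign (π⁻¹ * c) = sign π * (-1) ^ n`, the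
bijection `π ↦ π⁻¹ * c` reverses the excedance distribution within each sign class when `n + 1`
is odd. When `n + 1` is even it swaps the sign classes instead: the identity, the only
permutation without excedances, is even, so `t ^ 0` occurs only in `AExc⁺` and `t ^ n` only in
`AExc⁻`.
-/

open Equiv Equiv.Perm

lemma sign_eq_neg_one_pow_invA {n : ℕ} (π : Perm (Fin n)) : sign π = (-1) ^ invA π := by
  rw [sign_eq_prod_prod_Ioi, invA, ← prod_const, prod_filter, Fintype.prod_prod_type]
  refine prod_congr rfl fun i _ => ?_
  rw [← filter_lt_eq_Ioi, prod_filter]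
  refine prod_congr rfl fun j _ => ?_
  by_cases hij : i < j
  · rcases (π.injective.ne hij.ne).lt_or_gt with h | h <;> simp [hij, h, h.not_gt]
  · simp [hij]

lemma even_invA_iff_sign_eq_one {n : ℕ} (π : Perm (Fin n)) : Even (invA π) ↔ sign π = 1 := by
  rw [sign_eq_neg_one_pow_invA, neg_one_pow_eq_one_iff_even (by decide)]

def signExcCount (n : ℕ) (ε : ℤˣ) (k : ℕ) : ℕ :=
  #{π : Perm (Fin n) | sign π = ε ∧ excA π = k}

lemma coeff_sum_X_pow_excA {n : ℕ} (s : Finset (Perm (Fin n))) (k : ℕ) :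
    (∑ π ∈ s, (X : ℚ[X]) ^ excA π).coeff k = #{π ∈ s | excA π = k} := by
  simp [coeff_X_pow, eq_comm]

lemma coeff_AexcPt (n k : ℕ) : (AexcPt n).coeff k = signExcCount n 1 k := by
  simp_rw [AexcPt, coeff_sum_X_pow_excA, filter_filter, even_invA_iff_sign_eq_one,
    signExcCount]

lemma coeff_AexcMt (n k : ℕ) : (AexcMt n).coeff k = signExcCount n (-1) k := by
  simp_rw [AexcMt, coeff_sum_X_pow_excA, filter_filter, even_invA_iff_sign_eq_one,
    Int.units_ne_iff_eq_neg, signExcCount]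

lemma Equiv.Perm.eq_one_of_forall_apply_le {n : ℕ} {π : Perm (Fin n)} (h : ∀ i, π i ≤ i) :
    π = 1 := by
  have hsum : ∑ i, (π i : ℕ) = ∑ i : Fin n, (i : ℕ) := Equiv.sum_comp π (fun i => (i : ℕ))
  have := (sum_eq_sum_iff_of_le fun i _ => Fin.le_def.1 (h i)).1 hsum
  ext i
  simpa using this i (mem_univ i)

lemma excA_eq_zero_iff {n : ℕ} {π : Perm (Fin n)} : excA π = 0 ↔ π = 1 := by
  simp only [excA, card_eq_zero, filter_eq_empty_iff, mem_univ, true_imp_iff, not_lt]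
  exact ⟨eq_one_of_forall_apply_le, fun h i => by simp [h]⟩

lemma signExcCount_zero (n : ℕ) (ε : ℤˣ) : signExcCount n ε 0 = if ε = 1 then 1 else 0 := by
  have (π : Perm (Fin n)) : sign π = ε ∧ π = 1 ↔ π = 1 ∧ ε = 1 := by
    constructor <;> rintro ⟨rfl, rfl⟩ <;> simp
  simp only [signExcCount, excA_eq_zero_iff, this]
  split_ifs with hε <;> simp [hε, filter_eq']

lemma finRotate_symm_apply_lt_iff {n : ℕ} (x j : Fin (n + 1)) :
    (finRotate (n + 1)).symm x < j ↔ x ≠ 0 ∧ x ≤ j := by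
  rw [finRotate_symm_apply, Fin.lt_def, Fin.le_def, Fin.coe_sub_one]
  have := j.isLt
  split_ifs with hx
  · simp [hx]; omega
  · have := Fin.val_ne_iff.2 hx
    simp only [Fin.val_zero] at this
    simp only [ne_eq, hx, not_false_eq_true, true_and]
    omega

lemma excA_inv_mul_finRotate {n : ℕ} (π : Perm (Fin (n + 1))) :
    excA (π⁻¹ * finRotate (n + 1)) = #{j | π j ≠ 0 ∧ π j ≤ j} := by
  refine card_equiv (π⁻¹ * finRotate (n + 1)) fun i => ?_
  rw [mem_filter, mem_filter, ← finRotate_symm_apply_lt_iff]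
  simp

/- Each `j` is exactly one of: an excedance of `π`, the preimage of `0`, or a point with
`0 < π j ≤ j`. -/
lemma card_apply_ne_zero_and_apply_le_add_excA {n : ℕ} (π : Perm (Fin (n + 1))) :
    #{j | π j ≠ 0 ∧ π j ≤ j} + excA π = n := by
  have hzero : #{j | π j = 0} = 1 := by
    rw [card_equiv π (t := {0}) (by simp)]
    rfl
  have htotal : #{j | π j ≠ 0 ∧ π j ≤ j} + excA π + #{j | π j = 0} = n + 1 := by
    rw [excA]
    simp only [card_filter, ← sum_add_distrib]
    calc _ = ∑ _j : Fin (n + 1), 1 := sum_congr rfl fun j _ => ?_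
      _ = n + 1 := by simp
    by_cases h0 : π j = 0 <;> by_cases h : j < π j <;> simp_all [not_lt]
  omega

lemma excA_add_excA_inv_mul_finRotate {n : ℕ} (π : Perm (Fin (n + 1))) :
    excA π + excA (π⁻¹ * finRotate (n + 1)) = n := by
  rw [excA_inv_mul_finRotate, add_comm, card_apply_ne_zero_and_apply_le_add_excA]

lemma signExcCount_sub {n k : ℕ} (ε : ℤˣ) (hk : k ≤ n) :
    signExcCount (n + 1) ε (n - k) = signExcCount (n + 1) (ε * (-1) ^ n) k := by
  refine card_equiv ((Equiv.inv _).trans (Equiv.mulRight (finRotate (n + 1)))) fun π => ?_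
  have := excA_add_excA_inv_mul_finRotate π
  simp only [mem_filter, mem_univ, true_and, Equiv.trans_apply, Equiv.inv_apply, coe_mulRight,
    Perm.sign_mul, sign_inv, sign_finRotate, add_tsub_cancel_right, mul_left_inj]
  exact and_congr_right' (by omega)

lemma signExcCount_zero_ne_signExcCount_self {n : ℕ} (hn : Odd n) (ε : ℤˣ) :
    signExcCount (n + 1) ε 0 ≠ signExcCount (n + 1) ε n := by
  have h := signExcCount_sub ε n.zero_le
  rw [tsub_zero] at h
  rw [h, hn.neg_one_pow, signExcCount_zero, signExcCount_zero]
  rcases Int.units_eq_one_or ε with rfl | rfl <;> decide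

lemma signExcCount_palindromic {n : ℕ} (hn : Even n) (ε : ℤˣ) {k : ℕ} (hk : k ≤ n) :
    signExcCount (n + 1) ε k = signExcCount (n + 1) ε (n - k) := by
  rw [signExcCount_sub ε hk, hn.neg_one_pow, mul_one]

theorem stmt6 :
    (∀ n : ℕ, 3 ≤ n → Odd n →
      PalindromicDeg (AexcPt n) (n - 1) ∧ PalindromicDeg (AexcMt n) (n - 1)) ∧
    (∀ n : ℕ, 2 ≤ n → Even n →
      ¬ PalindromicDeg (AexcPt n) (n - 1) ∧ ¬ PalindromicDeg (AexcMt n) (n - 1)) := by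
  refine ⟨fun n hn hodd => ?_, fun n hn heven => ?_⟩
  · obtain ⟨m, rfl⟩ : ∃ m, n = m + 1 := ⟨n - 1, by omega⟩
    have hm : Even m := by simpa [Nat.odd_add_one] using hodd
    simp only [PalindromicDeg, add_tsub_cancel_right, coeff_AexcPt, coeff_AexcMt, Nat.cast_inj]
    exact ⟨fun k => signExcCount_palindromic hm 1, fun k => signExcCount_palindromic hm (-1)⟩
  · obtain ⟨m, rfl⟩ : ∃ m, n = m + 1 := ⟨n - 1, by omega⟩
    have hm : Odd m := by simpa [Nat.even_add_one] using heven
    simp only [PalindromicDeg, add_tsub_cancel_right, coeff_AexcPt, coeff_AexcMt, Nat.cast_inj,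
      not_forall]
    exact ⟨⟨0, m.zero_le, signExcCount_zero_ne_signExcCount_self hm 1⟩,
      ⟨0, m.zero_le, signExcCount_zero_ne_signExcCount_self hm (-1)⟩⟩
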